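/- Let θ₀ ∈ ℝ, Δ ∈ [0, 1/2], B ≥ 1, and let θ̂₁, …, θ̂_B be mutually independent real-valued random variables each having median bias about θ₀ at most Δ. Then P( θ₀ < min_{1≤j≤B} θ̂_j ) + P( θ₀ > max_{1≤j≤B} θ̂_j ) ≤ 2 (1/2 + Δ)^B; in particular P( θ₀ ∉ [min_{1≤j≤B} θ̂_j, max_{1≤j≤B} θ̂_j] ) ≤ 2^{1−B} (1 + 2Δ)^B. -/

import Mathlib

/-! Each of the events `θ₀ < min θ̂_j` and `max θ̂_j < θ₀` is contained in the intersection of `B`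
independent events `θ₀ < θ̂_j` (resp. `θ̂_j < θ₀`), and small median bias bounds the probability of
each of them by `1/2 + Δ`; by independence each of the two events has probability at most
`(1/2 + Δ)^B`, and `θ₀ ∉ [min θ̂_j, max θ̂_j]` is their union. -/

open MeasureTheory ProbabilityTheory

/-- The median bias of a real-valued random variable `X` about a point `θ`:
`(1/2 − min(P(X ≤ θ), P(X ≥ θ)))₊`. -/
noncomputable def medBias {Ω : Type*} [MeasurableSpace Ω] (P : Measure Ω)
    (X : Ω → ℝ) (θ : ℝ) : ℝ :=
  max (1 / 2 - min (P {ω | X ω ≤ θ}).toReal (P {ω | θ ≤ X ω}).toReal) 0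

open Set

section MedianBias

variable {Ω : Type*} [MeasurableSpace Ω] {P : Measure Ω} {X : Ω → ℝ} {θ Δ : ℝ}

lemma sub_le_probReal_of_medBias_le (h : medBias P X θ ≤ Δ) :
    1 / 2 - Δ ≤ P.real {ω | X ω ≤ θ} ∧ 1 / 2 - Δ ≤ P.real {ω | θ ≤ X ω} := by
  have hmin := (le_max_left _ _).trans h
  rwa [sub_le_comm, le_min_iff] at hmin

lemma probReal_gt_le_of_medBias_le [IsProbabilityMeasure P] (hX : Measurable X)
    (h : medBias P X θ ≤ Δ) : P.real {ω | θ < X ω} ≤ 1 / 2 + Δ := by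
  have hcompl : {ω | θ < X ω} = {ω | X ω ≤ θ}ᶜ := by ext; simp
  rw [hcompl, probReal_compl_eq_one_sub (measurableSet_le hX measurable_const)]
  linarith [(sub_le_probReal_of_medBias_le h).1]

lemma probReal_lt_le_of_medBias_le [IsProbabilityMeasure P] (hX : Measurable X)
    (h : medBias P X θ ≤ Δ) : P.real {ω | X ω < θ} ≤ 1 / 2 + Δ := by
  have hcompl : {ω | X ω < θ} = {ω | θ ≤ X ω}ᶜ := by ext; simp
  rw [hcompl, probReal_compl_eq_one_sub (measurableSet_le measurable_const hX)]
  linarith [(sub_le_probReal_of_medBias_le h).2]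

end MedianBias

lemma ProbabilityTheory.iIndepFun.probReal_iInter_preimage_le_pow {Ω ι β : Type*}
    [MeasurableSpace Ω] [MeasurableSpace β] [Fintype ι] {P : Measure Ω} {X : ι → Ω → β}
    (hX : iIndepFun X P) {S : Set β} (hS : MeasurableSet S) {c : ℝ}
    (h : ∀ i, P.real (X i ⁻¹' S) ≤ c) :
    P.real (⋂ i, X i ⁻¹' S) ≤ c ^ Fintype.card ι := by
  rw [measureReal_def, hX.meas_iInter fun _ => ⟨S, hS, rfl⟩, ENNReal.toReal_prod,
    ← Finset.card_univ, ← Finset.prod_const]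
  exact Finset.prod_le_prod (fun _ _ => ENNReal.toReal_nonneg) fun i _ => h i

theorem hulc_miscoverage_bound_general {Ω : Type*} [MeasurableSpace Ω]
    (P : Measure Ω) [IsProbabilityMeasure P]
    (θ₀ Δ : ℝ)
    (B : ℕ)
    (θh : Fin B → Ω → ℝ) (hmeas : ∀ j, Measurable (θh j))
    (hindep : iIndepFun θh P)
    (hbias : ∀ j, medBias P (θh j) θ₀ ≤ Δ) :
    (P {ω | θ₀ < ⨅ j, θh j ω}).toReal + (P {ω | (⨆ j, θh j ω) < θ₀}).toReal ≤
        2 * (1 / 2 + Δ) ^ B ∧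
      (P {ω | θ₀ ∉ Set.Icc (⨅ j, θh j ω) (⨆ j, θh j ω)}).toReal ≤
        (2 : ℝ) ^ ((1 : ℤ) - (B : ℤ)) * (1 + 2 * Δ) ^ B := by
  simp only [← measureReal_def]
  have hbelow : P.real {ω | θ₀ < ⨅ j, θh j ω} ≤ (1 / 2 + Δ) ^ B := calc
    _ ≤ P.real (⋂ j, θh j ⁻¹' Ioi θ₀) := measureReal_mono fun ω hω =>
          mem_iInter.2 fun j =>
            show θ₀ < θh j ω from hω.trans_le (ciInf_le (Finite.bddBelow_range _) j)
    _ ≤ _ := by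
          simpa using hindep.probReal_iInter_preimage_le_pow measurableSet_Ioi
            fun j => probReal_gt_le_of_medBias_le (hmeas j) (hbias j)
  have habove : P.real {ω | (⨆ j, θh j ω) < θ₀} ≤ (1 / 2 + Δ) ^ B := calc
    _ ≤ P.real (⋂ j, θh j ⁻¹' Iio θ₀) := measureReal_mono fun ω hω =>
          mem_iInter.2 fun j =>
            show θh j ω < θ₀ from (le_ciSup (Finite.bddAbove_range _) j).trans_lt hω
    _ ≤ _ := by
          simpa using hindep.probReal_iInter_preimage_le_pow measurableSet_Iio
            fun j => probReal_lt_le_of_medBias_le (hmeas j) (hbias j)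
  have hmiss : P.real {ω | θ₀ ∉ Icc (⨅ j, θh j ω) (⨆ j, θh j ω)} ≤
      P.real {ω | θ₀ < ⨅ j, θh j ω} + P.real {ω | (⨆ j, θh j ω) < θ₀} := by
    refine (measureReal_mono fun ω hω => ?_).trans (measureReal_union_le _ _)
    simp only [mem_ofPred_eq, mem_Icc, not_and_or, not_le] at hω
    exact hω
  have hconst : (2 : ℝ) ^ ((1 : ℤ) - (B : ℤ)) * (1 + 2 * Δ) ^ B = 2 * (1 / 2 + Δ) ^ B := by
    rw [zpow_sub₀ two_ne_zero, zpow_one, zpow_natCast, div_mul_eq_mul_div, mul_div_assoc,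
      ← div_pow]
    ring_nf
  exact ⟨by linarith, by rw [hconst]; linarith⟩

/-- If `θ̂₁, …, θ̂_B` are mutually independent with median bias about `θ₀`
at most `Δ`, then `P(θ₀ < min θ̂_j) + P(θ₀ > max θ̂_j) ≤ 2(1/2 + Δ)^B`, so
`P(θ₀ ∉ [min θ̂_j, max θ̂_j]) ≤ 2^{1−B}(1 + 2Δ)^B`. -/
theorem hulc_miscoverage_bound {Ω : Type*} [MeasurableSpace Ω]
    (P : Measure Ω) [IsProbabilityMeasure P]
    (θ₀ Δ : ℝ) (hΔ0 : 0 ≤ Δ) (hΔhalf : Δ ≤ 1 / 2)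
    (B : ℕ) (hB : 1 ≤ B)
    (θh : Fin B → Ω → ℝ) (hmeas : ∀ j, Measurable (θh j))
    (hindep : iIndepFun θh P)
    (hbias : ∀ j, medBias P (θh j) θ₀ ≤ Δ) :
    (P {ω | θ₀ < ⨅ j, θh j ω}).toReal + (P {ω | (⨆ j, θh j ω) < θ₀}).toReal ≤
        2 * (1 / 2 + Δ) ^ B ∧
      (P {ω | θ₀ ∉ Set.Icc (⨅ j, θh j ω) (⨆ j, θh j ω)}).toReal ≤
        (2 : ℝ) ^ ((1 : ℤ) - (B : ℤ)) * (1 + 2 * Δ) ^ B :=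
  hulc_miscoverage_bound_general P θ₀ Δ B θh hmeas hindep hbias
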